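/- arXiv:2101.10159 — 4 statements merged into one kernel-verified Lean document; each statement's English description precedes it below -/
import Mathlib

section
/- Let n be a positive integer and let P1d, P1i, P2d, P2i be n×n real symmetric positive semidefinite matrices. For w ∈ (0,1) define P₁(w) = (1/w)·P1d + P1i, P₂(w) = (1/(1−w))·P2d + P2i, and P(w) = (P₁(w)⁻¹ + P₂(w)⁻¹)⁻¹. Assume P₁(w) and P₂(w) are positive definite for every w ∈ (0,1). Then the function w ↦ log det(P(w)) is convex on the open interval (0,1). -/
/-!
Write `S w = P₁(w)⁻¹ + P₂(w)⁻¹`, so that `log det P(w) = -log det S(w)`. It suffices that `S` is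
concave for the Loewner order, since `log det` is monotone and concave on positive definite
matrices; after the congruence by `A^(-1/2)` both facts about `log det` become statements about
the scalar logarithm of generalised eigenvalues.

Concavity of `u ↦ (u⁻¹ A + B)⁻¹` is checked on quadratic forms. By the variational formula for
the parallel sum, `xᵀ (u⁻¹ A + B)⁻¹ x ≤ u * pᵀ A p / w² + pᵀ B p` for every `u`, where
`p = (w⁻¹ A + B)⁻¹ x`, with equality at `u = w`: the quadratic form lies below each of its
tangent lines.
-/

open Matrix Set
open scoped MatrixOrder

lemma concaveOn_of_forall_exists_affineMap_le {E : Type*} [AddCommGroup E] [Module ℝ E]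
    {s : Set E} {f : E → ℝ} (hs : Convex ℝ s)
    (h : ∀ w ∈ s, ∃ ℓ : E →ᵃ[ℝ] ℝ, ℓ w = f w ∧ ∀ u ∈ s, f u ≤ ℓ u) : ConcaveOn ℝ s f := by
  refine ⟨hs, fun u hu v hv a b ha hb hab => ?_⟩
  obtain ⟨ℓ, hℓw, hℓ⟩ := h _ (hs hu hv ha hb hab)
  calc a • f u + b • f v ≤ a • ℓ u + b • ℓ v := by
        gcongr
        exacts [hℓ u hu, hℓ v hv]
    _ = f (a • u + b • v) := by rw [← hℓw, Convex.combo_affine_apply hab]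

lemma ConcaveOn.comp_of_mapsTo {𝕜 E β γ : Type*} [Semiring 𝕜] [PartialOrder 𝕜]
    [AddCommMonoid E] [AddCommMonoid β] [PartialOrder β] [AddCommMonoid γ] [PartialOrder γ]
    [SMul 𝕜 E] [SMul 𝕜 β] [SMul 𝕜 γ] {s : Set E} {t : Set β} {f : E → β} {g : β → γ}
    (hg : ConcaveOn 𝕜 t g) (hf : ConcaveOn 𝕜 s f) (hg' : MonotoneOn g t) (hst : MapsTo f s t) :
    ConcaveOn 𝕜 s (g ∘ f) :=
  ⟨hf.1, fun _ hx _ hy _ _ ha hb hab =>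
    (hg.2 (hst hx) (hst hy) ha hb hab).trans <|
      hg' (hg.1 (hst hx) (hst hy) ha hb hab) (hst (hf.1 hx hy ha hb hab)) (hf.2 hx hy ha hb hab)⟩

lemma ConcaveOn.comp_const_sub {β : Type*} [AddCommMonoid β] [PartialOrder β] [SMul ℝ β]
    {s : Set ℝ} {f : ℝ → β} (hf : ConcaveOn ℝ s f) (c : ℝ) :
    ConcaveOn ℝ ((c - ·) ⁻¹' s) fun u => f (c - u) :=
  hf.comp_affineMap (AffineMap.const ℝ ℝ c - AffineMap.id ℝ ℝ)

namespace Matrix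

variable {ι : Type*}

lemma convex_setOf_posDef : Convex ℝ {A : Matrix ι ι ℝ | A.PosDef} := by
  intro A hA B hB a b ha hb hab
  rcases ha.eq_or_lt with rfl | ha
  · simpa [show b = 1 by linarith] using hB
  exact (hA.smul ha).add_posSemidef (hB.posSemidef.smul hb)

variable [Fintype ι]

lemma IsHermitian.dotProduct_mulVec_comm {X : Matrix ι ι ℝ} (hX : X.IsHermitian) (y z : ι → ℝ) :
    y ⬝ᵥ X *ᵥ z = z ⬝ᵥ X *ᵥ y := by
  rw [dotProduct_mulVec, ← mulVec_transpose, ← conjTranspose_eq_transpose_of_trivial, hX.eq,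
    dotProduct_comm]

theorem concaveOn_of_forall_concaveOn_dotProduct_mulVec {E : Type*} [AddCommMonoid E] [SMul ℝ E]
    {s : Set E} {S : E → Matrix ι ι ℝ} (hS : ∀ u ∈ s, (S u).IsHermitian)
    (h : ∀ x, ConcaveOn ℝ s fun u => x ⬝ᵥ S u *ᵥ x) : ConcaveOn ℝ s S := by
  refine ⟨(h 0).1, fun u hu v hv a b ha hb hab => ?_⟩
  have hw := (h 0).1 hu hv ha hb hab
  refine le_iff.mpr <| PosSemidef.of_dotProduct_mulVec_nonneg
    ((hS _ hw).sub (((hS u hu).smul (IsSelfAdjoint.all a)).add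
      ((hS v hv).smul (IsSelfAdjoint.all b)))) fun x => ?_
  have := (h x).2 hu hv ha hb hab
  simp only [star_trivial, sub_mulVec, add_mulVec, smul_mulVec, dotProduct_sub, dotProduct_add,
    dotProduct_smul, smul_eq_mul] at this ⊢
  linarith

variable [DecidableEq ι]

/-- Variational characterisation of `(X + Y)⁻¹`, the parallel sum of `X⁻¹` and `Y⁻¹`. -/
lemma dotProduct_inv_add_mulVec_le {X Y : Matrix ι ι ℝ} (hX : X.PosSemidef) (hY : Y.PosSemidef)
    (hXY : IsUnit (X + Y)) (y z : ι → ℝ) :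
    (X *ᵥ y + Y *ᵥ z) ⬝ᵥ (X + Y)⁻¹ *ᵥ (X *ᵥ y + Y *ᵥ z) ≤ y ⬝ᵥ X *ᵥ y + z ⬝ᵥ Y *ᵥ z := by
  set x := X *ᵥ y + Y *ᵥ z
  set q := (X + Y)⁻¹ *ᵥ x
  have hq : X *ᵥ q + Y *ᵥ q = x := by
    rw [← add_mulVec, mulVec_mulVec, mul_nonsing_inv _ ((isUnit_iff_isUnit_det _).mp hXY),
      one_mulVec]
  have hXq := hX.isHermitian.dotProduct_mulVec_comm y q
  have hYq := hY.isHermitian.dotProduct_mulVec_comm z q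
  have hy := hX.dotProduct_mulVec_nonneg (y - q)
  have hz := hY.dotProduct_mulVec_nonneg (z - q)
  have hxq : x ⬝ᵥ q = q ⬝ᵥ X *ᵥ y + q ⬝ᵥ Y *ᵥ z := by
    rw [dotProduct_comm, dotProduct_add]
  have hqq : q ⬝ᵥ X *ᵥ q + q ⬝ᵥ Y *ᵥ q = x ⬝ᵥ q := by
    rw [← dotProduct_add, hq, dotProduct_comm]
  simp only [star_trivial, mulVec_sub, sub_dotProduct, dotProduct_sub] at hy hz
  linarith

theorem concaveOn_dotProduct_mulVec_inv_one_div_smul_add {A B : Matrix ι ι ℝ}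
    (hA : A.PosSemidef) (hB : B.PosSemidef) {s : Set ℝ} (hs : Convex ℝ s)
    (hs₀ : ∀ u ∈ s, 0 < u) (hM : ∀ u ∈ s, IsUnit ((1 / u) • A + B)) (x : ι → ℝ) :
    ConcaveOn ℝ s fun u => x ⬝ᵥ ((1 / u) • A + B)⁻¹ *ᵥ x := by
  refine concaveOn_of_forall_exists_affineMap_le hs fun w hw => ?_
  have hw₀ := (hs₀ w hw).ne'
  set p := ((1 / w) • A + B)⁻¹ *ᵥ x
  have hp : ((1 / w) • A + B) *ᵥ p = x := by
    rw [mulVec_mulVec, mul_nonsing_inv _ ((isUnit_iff_isUnit_det _).mp (hM w hw)), one_mulVec]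
  -- the supporting line at `w` is `u ↦ u * (pᵀ A p / w²) + pᵀ B p`
  refine ⟨AffineMap.lineMap (p ⬝ᵥ B *ᵥ p) (p ⬝ᵥ A *ᵥ p / w ^ 2 + p ⬝ᵥ B *ᵥ p), ?_,
    fun u hu => ?_⟩
  · rw [AffineMap.lineMap_apply_ring', dotProduct_comm x p, ← hp, add_mulVec, dotProduct_add,
      smul_mulVec, dotProduct_smul, smul_eq_mul]
    field_simp
    ring
  · have hu₀ := (hs₀ u hu).ne'
    have hx : ((1 / u) • A) *ᵥ ((u / w) • p) + B *ᵥ p = x := by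
      have hc : u / w * (1 / u) = 1 / w := by field_simp
      rw [← hp, add_mulVec]
      simp only [smul_mulVec, mulVec_smul, smul_smul, hc]
    have := dotProduct_inv_add_mulVec_le (hA.smul (one_div_pos.mpr (hs₀ u hu)).le) hB (hM u hu)
      ((u / w) • p) p
    rw [hx] at this
    refine this.trans_eq ?_
    rw [AffineMap.lineMap_apply_ring']
    simp only [smul_mulVec, mulVec_smul, dotProduct_smul, smul_dotProduct, smul_eq_mul]
    field_simp
    ring

lemma IsHermitian.det_smul_one_add_smul {Q : Matrix ι ι ℝ} (hQ : Q.IsHermitian) (a b : ℝ) :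
    (a • (1 : Matrix ι ι ℝ) + b • Q).det = ∏ i, (a + b * hQ.eigenvalues i) := by
  set U : Matrix ι ι ℝ := (hQ.eigenvectorUnitary : Matrix ι ι ℝ)
  have hU : U * star U = 1 := Matrix.mem_unitaryGroup_iff.mp hQ.eigenvectorUnitary.2
  have hdiag : a • (1 : Matrix ι ι ℝ) + b • Q
      = U * diagonal (fun i => a + b * hQ.eigenvalues i) * star U := by
    conv_lhs => rw [hQ.spectral_theorem, Unitary.conjStarAlgAut_apply, ← hU]
    have : diagonal (fun i => a + b * hQ.eigenvalues i)
        = a • 1 + b • diagonal (RCLike.ofReal ∘ hQ.eigenvalues) := by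
      ext i j
      by_cases h : i = j <;> simp [diagonal, h]
    rw [this, Matrix.mul_add, Matrix.add_mul, Matrix.mul_smul, Matrix.smul_mul, Matrix.mul_one,
      Matrix.mul_smul, Matrix.smul_mul]
  rw [hdiag, det_mul_right_comm, hU, Matrix.one_mul, det_diagonal]

/-- The `μ i` are the eigenvalues of `A^(-1/2) * B * A^(-1/2)`. -/
lemma PosDef.exists_det_smul_add_smul {A B : Matrix ι ι ℝ} (hA : A.PosDef) (hB : B.PosSemidef) :
    ∃ μ : ι → ℝ, (∀ i, 0 ≤ μ i) ∧
      ∀ a b : ℝ, (a • A + b • B).det = A.det * ∏ i, (a + b * μ i) := by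
  set R := CFC.sqrt A
  have hRR : R * R = A := CFC.sqrt_mul_sqrt_self A hA.posSemidef.nonneg
  have hR : IsUnit R.det :=
    (isUnit_iff_isUnit_det R).mp ((CFC.isUnit_sqrt_iff A hA.posSemidef.nonneg).mpr hA.isUnit)
  have hRH : R.IsHermitian := (CFC.sqrt_nonneg A).posSemidef.isHermitian
  set Q := R⁻¹ * B * R⁻¹
  have hQ : Q.PosSemidef := by
    simpa only [hRH.inv.eq] using hB.conjTranspose_mul_mul_same R⁻¹
  refine ⟨hQ.isHermitian.eigenvalues, hQ.eigenvalues_nonneg, fun a b => ?_⟩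
  have hB : R * Q * R = B := by
    rw [Matrix.mul_assoc, Matrix.mul_assoc, nonsing_inv_mul _ hR, Matrix.mul_one,
      ← Matrix.mul_assoc, mul_nonsing_inv _ hR, Matrix.one_mul]
  have hsplit : a • A + b • B = R * (a • 1 + b • Q) * R := by
    rw [← hRR, ← hB, Matrix.mul_add, Matrix.add_mul, Matrix.mul_smul, Matrix.smul_mul,
      Matrix.mul_one, Matrix.mul_smul, Matrix.smul_mul]
  rw [hsplit, det_mul, det_mul, hQ.isHermitian.det_smul_one_add_smul, ← hRR, det_mul]
  ring

lemma PosDef.det_le_det {A B : Matrix ι ι ℝ} (hA : A.PosDef) (hAB : A ≤ B) : A.det ≤ B.det := by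
  obtain ⟨μ, hμ, hdet⟩ := hA.exists_det_smul_add_smul (le_iff.mp hAB)
  have h := hdet 1 1
  simp only [one_smul, add_sub_cancel, one_mul] at h
  rw [h]
  exact le_mul_of_one_le_right hA.det_pos.le
    (Finset.one_le_prod fun i _ => le_add_of_nonneg_right (hμ i))

lemma monotoneOn_log_det : MonotoneOn (fun A : Matrix ι ι ℝ => Real.log A.det) {A | A.PosDef} :=
  fun _ hA _ _ hAB => Real.log_le_log hA.det_pos (hA.det_le_det hAB)

lemma concaveOn_log_det : ConcaveOn ℝ {A : Matrix ι ι ℝ | A.PosDef} fun A => Real.log A.det := by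
  refine ⟨convex_setOf_posDef, fun A hA B hB a b ha hb hab => ?_⟩
  obtain ⟨μ, hμ, hdet⟩ := PosDef.exists_det_smul_add_smul hA hB.posSemidef
  have hdetB : B.det = A.det * ∏ i, μ i := by simpa using hdet 0 1
  have hμ₀ : ∀ i, 0 < μ i := by
    have : ∏ i, μ i ≠ 0 := fun h => hB.det_pos.ne' (by rw [hdetB, h, mul_zero])
    exact fun i => (hμ i).lt_of_ne' (Finset.prod_ne_zero_iff.mp this i (Finset.mem_univ i))
  have hlog : ∀ i, b * Real.log (μ i) ≤ Real.log (a + b * μ i) := fun i => by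
    simpa using strictConcaveOn_log_Ioi.concaveOn.2 (mem_Ioi.mpr one_pos) (hμ₀ i) ha hb hab
  have hcomb : ∀ i, a + b * μ i ≠ 0 := fun i => by nlinarith [hμ₀ i, mul_nonneg hb (hμ₀ i).le]
  have hlogB : Real.log B.det = Real.log A.det + ∑ i, Real.log (μ i) := by
    rw [hdetB, Real.log_mul hA.det_pos.ne' (Finset.prod_pos fun i _ => hμ₀ i).ne',
      Real.log_prod fun i _ => (hμ₀ i).ne']
  calc a • Real.log A.det + b • Real.log B.det
      = Real.log A.det + ∑ i, b * Real.log (μ i) := by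
        rw [hlogB, ← Finset.mul_sum, smul_eq_mul, smul_eq_mul]
        linear_combination Real.log A.det * hab
    _ ≤ Real.log A.det + ∑ i, Real.log (a + b * μ i) := by
        gcongr with i
        exact hlog i
    _ = Real.log (a • A + b • B).det := by
        rw [hdet, Real.log_mul hA.det_pos.ne' (Finset.prod_ne_zero_iff.mpr fun i _ => hcomb i),
          Real.log_prod fun i _ => hcomb i]

end Matrix

theorem split_cif_log_det_convex_general (n : ℕ)
    (P1d P1i P2d P2i : Matrix (Fin n) (Fin n) ℝ)
    (hP1d : P1d.PosSemidef) (hP1i : P1i.PosSemidef)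
    (hP2d : P2d.PosSemidef) (hP2i : P2i.PosSemidef)
    (hpos : ∀ w ∈ Set.Ioo (0 : ℝ) 1,
      ((1 / w) • P1d + P1i).PosDef ∧ ((1 / (1 - w)) • P2d + P2i).PosDef) :
    ConvexOn ℝ (Set.Ioo (0 : ℝ) 1)
      (fun w =>
        Real.log ((((1 / w) • P1d + P1i)⁻¹ + ((1 / (1 - w)) • P2d + P2i)⁻¹)⁻¹).det) := by
  set S : ℝ → Matrix (Fin n) (Fin n) ℝ :=
    fun w => ((1 / w) • P1d + P1i)⁻¹ + ((1 / (1 - w)) • P2d + P2i)⁻¹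
  have hS : MapsTo S (Ioo (0 : ℝ) 1) {A | A.PosDef} := fun w hw =>
    (hpos w hw).1.inv.add (hpos w hw).2.inv
  have hP1 (x : Fin n → ℝ) :
      ConcaveOn ℝ (Ioo (0 : ℝ) 1) fun w => x ⬝ᵥ ((1 / w) • P1d + P1i)⁻¹ *ᵥ x :=
    concaveOn_dotProduct_mulVec_inv_one_div_smul_add hP1d hP1i (convex_Ioo 0 1)
      (fun _ hu => hu.1) (fun u hu => (hpos u hu).1.isUnit) x
  have hP2 (x : Fin n → ℝ) :
      ConcaveOn ℝ (Ioo (0 : ℝ) 1) fun w => x ⬝ᵥ ((1 / (1 - w)) • P2d + P2i)⁻¹ *ᵥ x := by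
    have := (concaveOn_dotProduct_mulVec_inv_one_div_smul_add hP2d hP2i (convex_Ioo 0 1)
      (fun _ hv => hv.1) (fun v hv => by
        simpa using (hpos (1 - v) ⟨by linarith [hv.2], by linarith [hv.1]⟩).2.isUnit) x
      ).comp_const_sub 1
    rwa [preimage_const_sub_Ioo, sub_zero, sub_self] at this
  have hSconc : ConcaveOn ℝ (Ioo (0 : ℝ) 1) S :=
    concaveOn_of_forall_concaveOn_dotProduct_mulVec (fun w hw => (hS hw).isHermitian) fun x =>
      ((hP1 x).add (hP2 x)).congr fun w _ => by simp [S, add_mulVec, dotProduct_add]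
  refine (concaveOn_log_det.comp_of_mapsTo hSconc monotoneOn_log_det hS).neg.congr fun w _ => ?_
  simp [S, det_nonsing_inv, Real.log_inv]

/-- The function `w ↦ log det P(w)` for the split CIF is convex on `(0,1)`. -/
theorem split_cif_log_det_convex (n : ℕ) (hn : 0 < n)
    (P1d P1i P2d P2i : Matrix (Fin n) (Fin n) ℝ)
    (hP1d : P1d.PosSemidef) (hP1i : P1i.PosSemidef)
    (hP2d : P2d.PosSemidef) (hP2i : P2i.PosSemidef)
    (hpos : ∀ w ∈ Set.Ioo (0 : ℝ) 1,
      ((1 / w) • P1d + P1i).PosDef ∧ ((1 / (1 - w)) • P2d + P2i).PosDef) :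
    ConvexOn ℝ (Set.Ioo (0 : ℝ) 1)
      (fun w =>
        Real.log ((((1 / w) • P1d + P1i)⁻¹ + ((1 / (1 - w)) • P2d + P2i)⁻¹)⁻¹).det) :=
  split_cif_log_det_convex_general n P1d P1i P2d P2i hP1d hP1i hP2d hP2i hpos
end

section
/- Let n be a positive integer and let P1d, P1i, P2d, P2i be n×n real symmetric positive semidefinite matrices. For w ∈ (0,1) define P₁(w) = (1/w)·P1d + P1i, P₂(w) = (1/(1−w))·P2d + P2i, and P(w) = (P₁(w)⁻¹ + P₂(w)⁻¹)⁻¹. Assume P₁(w) and P₂(w) are positive definite for every w ∈ (0,1). Then for every w ∈ (0,1), setting D₁ = P1d/w, D₂ = P2d/(1−w), B₃ = P₁(w)⁻¹ + P₂(w)⁻¹, and C = P₁(w)⁻¹·(D₁/w)·P₁(w)⁻¹ − P₂(w)⁻¹·(D₂/(1−w))·P₂(w)⁻¹, the second derivative of w ↦ log det(P(w)) at w is bounded below by tr(B₃⁻¹·C·B₃⁻¹·C), which is nonnegative. -/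
/-!
Write `B(t) = P₁(t)⁻¹ + P₂(t)⁻¹`, so that `log det P = -log det B`. Jacobi's formula and
`(B⁻¹)' = -B⁻¹ B' B⁻¹` give `(log det P)'' = tr(B⁻¹ B' B⁻¹ B') - tr(B⁻¹ B'')`, and `B'` is
exactly `C`.
Each `s ↦ (D/s + E)⁻¹` is matrix concave: with `R = D/s` and `Q = (R + E)⁻¹` its second
derivative is `-(2/s²) Q (R - R Q R) Q`, and `R - R Q R = (Q R)ᴴ E (Q R) + (Q E)ᴴ R (Q E) ≥ 0`.
Hence `-B'' ≥ 0`, and both traces have the right sign because the trace of a product of two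
positive semidefinite matrices is nonnegative.
-/

open Matrix Finset Filter Topology

attribute [local instance] Matrix.linftyOpNormedAddCommGroup Matrix.linftyOpNormedSpace
  Matrix.linftyOpNormedRing Matrix.linftyOpNormedAlgebra

section MatrixCalculus

variable {𝕜 ι : Type*} [RCLike 𝕜] [Fintype ι]
  {A : 𝕜 → Matrix ι ι 𝕜} {A' : Matrix ι ι 𝕜} {x : 𝕜}

theorem HasDerivAt.matrix_elem (h : HasDerivAt A A' x) (i j : ι) :
    HasDerivAt (fun t => A t i j) (A' i j) x :=
  (entryLinearMap 𝕜 𝕜 i j).toContinuousLinearMap.hasFDerivAt.comp_hasDerivAt x h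

theorem HasDerivAt.matrix_trace (h : HasDerivAt A A' x) :
    HasDerivAt (fun t => (A t).trace) A'.trace x :=
  (traceLinearMap ι 𝕜 𝕜).toContinuousLinearMap.hasFDerivAt.comp_hasDerivAt x h

variable [DecidableEq ι]

theorem sum_det_updateCol_eq_trace_adjugate_mul (B H : Matrix ι ι 𝕜) :
    ∑ i, (B.updateCol i (Hᵀ i)).det = (B.adjugate * H).trace := by
  have hcol : ∀ i, (B.updateCol i (Hᵀ i)).det = (B.adjugate *ᵥ Hᵀ i) i := fun i => by
    rw [← cramer_eq_adjugate_mulVec, cramer_apply]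
  simp only [hcol, trace, Matrix.diag, mul_apply, mulVec, dotProduct, transpose_apply]

theorem det_updateCol_eq_sum_prod_erase (B : Matrix ι ι 𝕜) (i : ι) (c : ι → 𝕜) :
    (B.updateCol i c).det =
      ∑ σ : Equiv.Perm ι, (σ.sign : 𝕜) * ((∏ j ∈ univ.erase i, B (σ j) j) * c (σ i)) := by
  rw [det_apply']
  refine sum_congr rfl fun σ _ => ?_
  rw [← prod_erase_mul univ _ (mem_univ i), updateCol_self]
  congr 2
  exact prod_congr rfl fun j hj => updateCol_ne (ne_of_mem_erase hj)

theorem HasDerivAt.matrix_det (h : HasDerivAt A A' x) :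
    HasDerivAt (fun t => (A t).det) ((A x).adjugate * A').trace x := by
  have hterm : ∀ σ : Equiv.Perm ι, HasDerivAt (fun t => (σ.sign : 𝕜) * ∏ i, A t (σ i) i)
      ((σ.sign : 𝕜) * ∑ i, (∏ j ∈ univ.erase i, A x (σ j) j) • A' (σ i) i) x := fun σ =>
    (HasDerivAt.fun_finsetProd fun i _ => h.matrix_elem (σ i) i).const_mul _
  have hsum := HasDerivAt.fun_sum (u := univ) fun σ _ => hterm σ
  simp only [← det_apply'] at hsum
  refine hsum.congr_deriv ?_
  simp only [← sum_det_updateCol_eq_trace_adjugate_mul, det_updateCol_eq_sum_prod_erase,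
    smul_eq_mul, mul_sum, transpose_apply]
  exact sum_comm

theorem HasDerivAt.matrix_inv (h : HasDerivAt A A' x) (hA : IsUnit (A x)) :
    HasDerivAt (fun t => (A t)⁻¹) (-((A x)⁻¹ * A' * (A x)⁻¹)) x := by
  obtain ⟨u, hu⟩ := hA
  have hinv : HasFDerivAt Ring.inverse
      (-ContinuousLinearMap.mulLeftRight 𝕜 _ ↑u⁻¹ ↑u⁻¹) (A x) := hu ▸ hasFDerivAt_ringInverse u
  simp only [nonsing_inv_eq_ringInverse]
  refine (hinv.comp_hasDerivAt x h).congr_deriv ?_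
  rw [← hu, Ring.inverse_unit]
  rfl

end MatrixCalculus

section LogDet

variable {ι : Type*} [Fintype ι] [DecidableEq ι] {x : ℝ}

theorem HasDerivAt.log_matrix_det {A : ℝ → Matrix ι ι ℝ} {A' : Matrix ι ι ℝ}
    (h : HasDerivAt A A' x) (hA : (A x).det ≠ 0) :
    HasDerivAt (fun t => Real.log (A t).det) ((A x)⁻¹ * A').trace x := by
  refine (h.matrix_det.log hA).congr_deriv ?_
  rw [Matrix.inv_def, Ring.inverse_eq_inv, smul_mul, trace_smul, smul_eq_mul, div_eq_inv_mul]

theorem deriv_deriv_log_det_inv {B B' : ℝ → Matrix ι ι ℝ} {B'' : Matrix ι ι ℝ}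
    (hB : ∀ᶠ t in 𝓝 x, HasDerivAt B (B' t) t ∧ (B t).det ≠ 0) (hB' : HasDerivAt B' B'' x) :
    deriv (deriv fun t => Real.log ((B t)⁻¹).det) x =
      ((B x)⁻¹ * B' x * (B x)⁻¹ * B' x).trace - ((B x)⁻¹ * B'').trace := by
  have hlog : (fun t => Real.log ((B t)⁻¹).det) = fun t => -Real.log (B t).det := by
    simp only [det_nonsing_inv, Ring.inverse_eq_inv, Real.log_inv]
  have hderiv : deriv (fun t => Real.log ((B t)⁻¹).det) =ᶠ[𝓝 x]
      fun t => -((B t)⁻¹ * B' t).trace :=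
    hB.mono fun t ⟨hBt, hdet⟩ => by rw [hlog]; exact (hBt.log_matrix_det hdet).neg.deriv
  obtain ⟨hBx, hdetx⟩ := hB.self_of_nhds
  rw [hderiv.deriv_eq, ((hBx.matrix_inv (isUnit_iff_isUnit_det _ |>.mpr hdetx.isUnit)).fun_mul
    hB').matrix_trace.fun_neg.deriv]
  simp only [neg_mul, trace_add, trace_neg, mul_assoc]
  ring

end LogDet

section Positivity

open scoped MatrixOrder ComplexOrder

variable {𝕜 ι : Type*} [RCLike 𝕜] [Fintype ι]

theorem Matrix.PosSemidef.trace_mul_nonneg {A M : Matrix ι ι 𝕜} (hA : A.PosSemidef)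
    (hM : M.PosSemidef) : 0 ≤ (A * M).trace := by
  classical
  obtain ⟨X, rfl⟩ := CStarAlgebra.nonneg_iff_eq_star_mul_self.mp hA.nonneg
  rw [star_eq_conjTranspose, mul_assoc, trace_mul_comm]
  exact (hM.mul_mul_conjTranspose_same X).trace_nonneg

theorem Matrix.PosSemidef.trace_mul_mul_mul_nonneg {A C : Matrix ι ι 𝕜} (hA : A.PosSemidef)
    (hC : C.IsHermitian) : 0 ≤ (A * C * A * C).trace := by
  have h := hA.trace_mul_nonneg (hA.conjTranspose_mul_mul_same C)
  rwa [hC.eq, ← mul_assoc, ← mul_assoc] at h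

variable [DecidableEq ι]

theorem Matrix.PosSemidef.sub_mul_inv_add_mul {R E : Matrix ι ι 𝕜} (hR : R.PosSemidef)
    (hE : E.PosSemidef) : (R - R * (R + E)⁻¹ * R).PosSemidef := by
  by_cases hRE : IsUnit (R + E).det
  swap
  · simpa [nonsing_inv_apply_not_isUnit _ hRE] using hR
  set X := (R + E)⁻¹
  have hX : X.IsHermitian := (hR.isHermitian.add hE.isHermitian).inv
  have hXE : X * E = 1 - X * R := by
    rw [eq_sub_iff_add_eq, ← mul_add, add_comm, nonsing_inv_mul _ hRE]
  have hEX : E * X = 1 - R * X := by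
    rw [eq_sub_iff_add_eq, ← add_mul, add_comm, mul_nonsing_inv _ hRE]
  have key : R - R * X * R = (X * R)ᴴ * E * (X * R) + (X * E)ᴴ * R * (X * E) := by
    simp only [conjTranspose_mul, hR.isHermitian.eq, hE.isHermitian.eq, hX.eq]
    calc R - R * X * R = R * (X * E) * X * R + E * X * R * (X * E) := by
          rw [hXE, hEX]; noncomm_ring
      _ = _ := by noncomm_ring
  rw [key]
  exact (hE.conjTranspose_mul_mul_same _).add (hR.conjTranspose_mul_mul_same _)

end Positivity

section SplitInformation

variable {ι : Type*} [Fintype ι] [DecidableEq ι] {D E : Matrix ι ι ℝ} {s : ℝ}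

noncomputable def splitInfo (D E : Matrix ι ι ℝ) (s : ℝ) : Matrix ι ι ℝ := ((1 / s) • D + E)⁻¹

noncomputable def splitInfoDeriv (D E : Matrix ι ι ℝ) (s : ℝ) : Matrix ι ι ℝ :=
  splitInfo D E s * ((1 / s) • ((1 / s) • D)) * splitInfo D E s

noncomputable def splitInfoDeriv2 (D E : Matrix ι ι ℝ) (s : ℝ) : Matrix ι ι ℝ :=
  -(2 / s ^ 2) • (splitInfo D E s * ((1 / s) • D - (1 / s) • D * splitInfo D E s * ((1 / s) • D))
    * splitInfo D E s)

theorem hasDerivAt_splitInfo (hs : s ≠ 0) (h : IsUnit ((1 / s) • D + E)) :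
    HasDerivAt (splitInfo D E) (splitInfoDeriv D E s) s := by
  have hP := ((hasDerivAt_inv hs).smul_const D).add_const E
  simp only [inv_eq_one_div] at hP
  refine (hP.matrix_inv h).congr_deriv ?_
  simp only [splitInfoDeriv, splitInfo, smul_smul, mul_smul_comm, smul_mul_assoc, neg_smul,
    Matrix.neg_mul, Matrix.mul_neg, neg_neg]
  congr 1
  ring

theorem hasDerivAt_splitInfoDeriv (hs : s ≠ 0) (h : IsUnit ((1 / s) • D + E)) :
    HasDerivAt (splitInfoDeriv D E) (splitInfoDeriv2 D E s) s := by
  have hM := (hasDerivAt_inv hs).smul ((hasDerivAt_inv hs).smul_const D)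
  simp only [inv_eq_one_div] at hM
  have hQ := hasDerivAt_splitInfo hs h
  refine ((hQ.fun_mul hM).fun_mul hQ).congr_deriv ?_
  simp only [splitInfoDeriv2, splitInfoDeriv, Pi.smul_apply', smul_smul, mul_smul_comm,
    smul_mul_assoc, mul_sub, sub_mul, smul_sub, mul_assoc, mul_add, add_mul]
  match_scalars <;> field_simp <;> ring

theorem isHermitian_splitInfoDeriv (hD : D.IsHermitian) (hE : E.IsHermitian) :
    (splitInfoDeriv D E s).IsHermitian := by
  have hQ : (splitInfo D E s).IsHermitian := ((hD.smul (.all _)).add hE).inv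
  have h := isHermitian_conjTranspose_mul_mul (splitInfo D E s)
    ((hD.smul (.all (1 / s))).smul (.all (1 / s)))
  rwa [hQ.eq] at h

theorem posSemidef_neg_splitInfoDeriv2 (hs : 0 ≤ s) (hD : D.PosSemidef) (hE : E.PosSemidef) :
    (-splitInfoDeriv2 D E s).PosSemidef := by
  have hR : ((1 / s) • D).PosSemidef := hD.smul (by positivity)
  have hQ : (splitInfo D E s).IsHermitian := (hR.isHermitian.add hE.isHermitian).inv
  have h := (hR.sub_mul_inv_add_mul hE).conjTranspose_mul_mul_same (splitInfo D E s)
  rw [hQ.eq] at h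
  rw [splitInfoDeriv2, neg_smul, neg_neg]
  exact h.smul (by positivity)

variable {D₁ E₁ D₂ E₂ : Matrix ι ι ℝ} {t : ℝ}

/-- `B₃` as a function of the weight. -/
noncomputable def fusedInfo (D₁ E₁ D₂ E₂ : Matrix ι ι ℝ) (t : ℝ) : Matrix ι ι ℝ :=
  splitInfo D₁ E₁ t + splitInfo D₂ E₂ (1 - t)

/-- `C` as a function of the weight. -/
noncomputable def fusedInfoDeriv (D₁ E₁ D₂ E₂ : Matrix ι ι ℝ) (t : ℝ) : Matrix ι ι ℝ :=
  splitInfoDeriv D₁ E₁ t - splitInfoDeriv D₂ E₂ (1 - t)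

theorem hasDerivAt_fusedInfo (ht₀ : t ≠ 0) (ht₁ : 1 - t ≠ 0) (h₁ : IsUnit ((1 / t) • D₁ + E₁))
    (h₂ : IsUnit ((1 / (1 - t)) • D₂ + E₂)) :
    HasDerivAt (fusedInfo D₁ E₁ D₂ E₂) (fusedInfoDeriv D₁ E₁ D₂ E₂ t) t :=
  ((hasDerivAt_splitInfo ht₀ h₁).add (HasDerivAt.comp_const_sub 1 t
    (hasDerivAt_splitInfo ht₁ h₂))).congr_deriv (sub_eq_add_neg _ _).symm

theorem hasDerivAt_fusedInfoDeriv (ht₀ : t ≠ 0) (ht₁ : 1 - t ≠ 0)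
    (h₁ : IsUnit ((1 / t) • D₁ + E₁)) (h₂ : IsUnit ((1 / (1 - t)) • D₂ + E₂)) :
    HasDerivAt (fusedInfoDeriv D₁ E₁ D₂ E₂)
      (splitInfoDeriv2 D₁ E₁ t + splitInfoDeriv2 D₂ E₂ (1 - t)) t :=
  ((hasDerivAt_splitInfoDeriv ht₀ h₁).sub (HasDerivAt.comp_const_sub 1 t
    (hasDerivAt_splitInfoDeriv ht₁ h₂))).congr_deriv (sub_neg_eq_add _ _)

end SplitInformation

theorem split_cif_second_deriv_lower_bound_general (n : ℕ)
    (P1d P1i P2d P2i : Matrix (Fin n) (Fin n) ℝ)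
    (hP1d : P1d.PosSemidef) (hP1i : P1i.PosSemidef)
    (hP2d : P2d.PosSemidef) (hP2i : P2i.PosSemidef)
    (hpos : ∀ w ∈ Set.Ioo (0 : ℝ) 1,
      ((1 / w) • P1d + P1i).PosDef ∧ ((1 / (1 - w)) • P2d + P2i).PosDef)
    (w : ℝ) (hw : w ∈ Set.Ioo (0 : ℝ) 1)
    (D₁ D₂ B₃ C : Matrix (Fin n) (Fin n) ℝ)
    (hD₁ : D₁ = (1 / w) • P1d) (hD₂ : D₂ = (1 / (1 - w)) • P2d)
    (hB₃ : B₃ = ((1 / w) • P1d + P1i)⁻¹ + ((1 / (1 - w)) • P2d + P2i)⁻¹)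
    (hC : C = ((1 / w) • P1d + P1i)⁻¹ * ((1 / w) • D₁) * ((1 / w) • P1d + P1i)⁻¹
            - ((1 / (1 - w)) • P2d + P2i)⁻¹ * ((1 / (1 - w)) • D₂)
              * ((1 / (1 - w)) • P2d + P2i)⁻¹) :
    Matrix.trace (B₃⁻¹ * C * B₃⁻¹ * C) ≤
      deriv (deriv (fun x =>
        Real.log ((((1 / x) • P1d + P1i)⁻¹ + ((1 / (1 - x)) • P2d + P2i)⁻¹)⁻¹).det)) w ∧
    0 ≤ Matrix.trace (B₃⁻¹ * C * B₃⁻¹ * C) := by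
  obtain ⟨hw0, hw1⟩ := hw
  obtain ⟨hpd₁, hpd₂⟩ := hpos w ⟨hw0, hw1⟩
  have hB : ∀ᶠ t in 𝓝 w, HasDerivAt (fusedInfo P1d P1i P2d P2i)
      (fusedInfoDeriv P1d P1i P2d P2i t) t ∧ (fusedInfo P1d P1i P2d P2i t).det ≠ 0 := by
    filter_upwards [isOpen_Ioo.mem_nhds ⟨hw0, hw1⟩] with t ⟨ht0, ht1⟩
    obtain ⟨htpd₁, htpd₂⟩ := hpos t ⟨ht0, ht1⟩
    exact ⟨hasDerivAt_fusedInfo ht0.ne' (sub_pos.2 ht1).ne' htpd₁.isUnit htpd₂.isUnit,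
      (htpd₁.inv.add htpd₂.inv).det_pos.ne'⟩
  have hB' := hasDerivAt_fusedInfoDeriv hw0.ne' (sub_pos.2 hw1).ne' hpd₁.isUnit hpd₂.isUnit
  have hBinv : ((fusedInfo P1d P1i P2d P2i w)⁻¹).PosSemidef :=
    (hpd₁.inv.add hpd₂.inv).inv.posSemidef
  have hCherm : (fusedInfoDeriv P1d P1i P2d P2i w).IsHermitian :=
    (isHermitian_splitInfoDeriv hP1d.isHermitian hP1i.isHermitian).sub
      (isHermitian_splitInfoDeriv hP2d.isHermitian hP2i.isHermitian)
  have hconcave : (-(splitInfoDeriv2 P1d P1i w + splitInfoDeriv2 P2d P2i (1 - w))).PosSemidef := by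
    rw [neg_add]
    exact (posSemidef_neg_splitInfoDeriv2 hw0.le hP1d hP1i).add
      (posSemidef_neg_splitInfoDeriv2 (sub_pos.2 hw1).le hP2d hP2i)
  obtain rfl : B₃ = fusedInfo P1d P1i P2d P2i w := hB₃
  obtain rfl : C = fusedInfoDeriv P1d P1i P2d P2i w := by rw [hC, hD₁, hD₂]; rfl
  refine ⟨le_of_le_of_eq ?_ (deriv_deriv_log_det_inv hB hB').symm,
    hBinv.trace_mul_mul_mul_nonneg hCherm⟩
  have hcurv := hBinv.trace_mul_nonneg hconcave
  rw [Matrix.mul_neg, trace_neg] at hcurv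
  linarith

/-- For the split CIF, at each `w ∈ (0,1)`, with `D₁ = P1d/w`, `D₂ = P2d/(1−w)`,
`B₃ = P₁(w)⁻¹ + P₂(w)⁻¹` and
`C = P₁(w)⁻¹ (D₁/w) P₁(w)⁻¹ − P₂(w)⁻¹ (D₂/(1−w)) P₂(w)⁻¹`, the second derivative of
`x ↦ log det P(x)` at `w` is bounded below by `tr(B₃⁻¹ C B₃⁻¹ C)`, which is nonnegative. -/
theorem split_cif_second_deriv_lower_bound (n : ℕ) (hn : 0 < n)
    (P1d P1i P2d P2i : Matrix (Fin n) (Fin n) ℝ)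
    (hP1d : P1d.PosSemidef) (hP1i : P1i.PosSemidef)
    (hP2d : P2d.PosSemidef) (hP2i : P2i.PosSemidef)
    (hpos : ∀ w ∈ Set.Ioo (0 : ℝ) 1,
      ((1 / w) • P1d + P1i).PosDef ∧ ((1 / (1 - w)) • P2d + P2i).PosDef)
    (w : ℝ) (hw : w ∈ Set.Ioo (0 : ℝ) 1)
    (D₁ D₂ B₃ C : Matrix (Fin n) (Fin n) ℝ)
    (hD₁ : D₁ = (1 / w) • P1d) (hD₂ : D₂ = (1 / (1 - w)) • P2d)
    (hB₃ : B₃ = ((1 / w) • P1d + P1i)⁻¹ + ((1 / (1 - w)) • P2d + P2i)⁻¹)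
    (hC : C = ((1 / w) • P1d + P1i)⁻¹ * ((1 / w) • D₁) * ((1 / w) • P1d + P1i)⁻¹
            - ((1 / (1 - w)) • P2d + P2i)⁻¹ * ((1 / (1 - w)) • D₂)
              * ((1 / (1 - w)) • P2d + P2i)⁻¹) :
    Matrix.trace (B₃⁻¹ * C * B₃⁻¹ * C) ≤
      deriv (deriv (fun x =>
        Real.log ((((1 / x) • P1d + P1i)⁻¹ + ((1 / (1 - x)) • P2d + P2i)⁻¹)⁻¹).det)) w ∧
    0 ≤ Matrix.trace (B₃⁻¹ * C * B₃⁻¹ * C) :=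
  split_cif_second_deriv_lower_bound_general n P1d P1i P2d P2i hP1d hP1i hP2d hP2i hpos w hw D₁ D₂
    B₃ C hD₁ hD₂ hB₃ hC
end

section
/- Let n be a positive integer and let P1d, P1i, P2d, P2i be n×n real symmetric positive semidefinite matrices. For w ∈ (0,1) define P₁(w) = (1/w)·P1d + P1i and P₂(w) = (1/(1−w))·P2d + P2i, and assume P₁(w) and P₂(w) are positive definite for every w ∈ (0,1). Fix w ∈ (0,1) and set D₁ = P1d/w, D₂ = P2d/(1−w), P₃ = P₁(w) + P₂(w). Then the second derivative at w of the function w ↦ log det P₁(w) + log det P₂(w) − log det(P₁(w)+P₂(w)) equals T₁/w² + T₂/(1−w)² − 2·T₃/(w·(1−w)), where T₁ = tr(2P₁⁻¹D₁ − 2P₃⁻¹D₁ − P₁⁻¹D₁P₁⁻¹D₁ + P₃⁻¹D₁P₃⁻¹D₁), T₂ = tr(2P₂⁻¹D₂ − 2P₃⁻¹D₂ − P₂⁻¹D₂P₂⁻¹D₂ + P₃⁻¹D₂P₃⁻¹D₂), and T₃ = tr(P₃⁻¹D₁P₃⁻¹D₂) (with P₁ = P₁(w), P₂ = P₂(w)).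 -/
/-!
For a curve of invertible matrices, Jacobi's formula `(log det M)' = tr (M⁻¹ M')` and
`(M⁻¹)' = -M⁻¹ M' M⁻¹` give `(log det M)'' = tr (M⁻¹ M'' - M⁻¹ M' M⁻¹ M')`. For the pencils
`P₁(t)`, `P₂(t)` and `P₁(t) + P₂(t)` the derivatives at `w` are multiples of `D₁` and `D₂`:
`P₁' = -D₁/w`, `P₁'' = 2 D₁/w²`, `P₂' = D₂/(1-w)`, `P₂'' = 2 D₂/(1-w)²`. Expanding the three
traces, the cross terms of `P₃` combine by cyclicity of the trace into `T₃`.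
-/

open Matrix Filter Topology

/- Derivatives of matrix-valued curves only see the product topology on matrices; the operator
norm is a device that makes matrices a complete normed algebra. -/
attribute [local instance] Matrix.linftyOpNormedAddCommGroup Matrix.linftyOpNormedSpace
  Matrix.linftyOpNormedRing Matrix.linftyOpNormedAlgebra

theorem deriv_deriv_eq_of_eventually_hasDerivAt {𝕜 F : Type*} [NontriviallyNormedField 𝕜]
    [NormedAddCommGroup F] [NormedSpace 𝕜 F] {f f' : 𝕜 → F} {f'' : F} {x : 𝕜}
    (hf : ∀ᶠ t in 𝓝 x, HasDerivAt f (f' t) t) (hf' : HasDerivAt f' f'' x) :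
    deriv (deriv f) x = f'' := by
  have hderiv : deriv f =ᶠ[𝓝 x] f' := hf.mono fun t ht => ht.deriv
  exact hderiv.deriv_eq.trans hf'.deriv

section MatrixCalculus

variable {𝕜 : Type*} {n : Type*} [Fintype n] [DecidableEq n]

theorem Matrix.hasDerivAt_det_add_smul [NontriviallyNormedField 𝕜] (A B : Matrix n n 𝕜)
    (hA : IsUnit A.det) :
    HasDerivAt (fun t : 𝕜 => (A + t • B).det) (A.det * trace (A⁻¹ * B)) 0 := by
  set p := (det (1 + (Polynomial.X : Polynomial 𝕜) • (A⁻¹ * B).map Polynomial.C)).divX.divX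
  have hexpand : ∀ t : 𝕜,
      (A + t • B).det = A.det * (1 + trace (A⁻¹ * B) * t + p.eval t * t ^ 2) := by
    intro t
    rw [← det_one_add_smul, ← det_mul, mul_add, mul_one, Matrix.mul_smul,
      mul_nonsing_inv_cancel_left _ _ hA]
  simp only [hexpand]
  have hquad : HasDerivAt (fun t : 𝕜 => p.eval t * t ^ 2) 0 0 := by
    simpa using (p.hasDerivAt 0).fun_mul (hasDerivAt_pow 2 (0 : 𝕜))
  simpa using
    ((((hasDerivAt_id (0 : 𝕜)).const_mul (trace (A⁻¹ * B))).const_add 1).add hquad).const_mul A.det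

/- Jacobi's formula: `det` is a polynomial in the entries, hence differentiable, and its
derivative in the direction `M'` is read off along the line `t ↦ M x + t • M'`. -/
theorem HasDerivAt.det [NontriviallyNormedField 𝕜] {M : 𝕜 → Matrix n n 𝕜} {M' : Matrix n n 𝕜}
    {x : 𝕜} (hM : HasDerivAt M M' x) (hx : IsUnit (M x).det) :
    HasDerivAt (fun t => (M t).det) ((M x).det * ((M x)⁻¹ * M').trace) x := by
  have hdet : HasFDerivAt (fun A : Matrix n n 𝕜 => A.det)
      (fderiv 𝕜 (fun A : Matrix n n 𝕜 => A.det) (M x)) (M x) := by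
    refine DifferentiableAt.hasFDerivAt ?_
    simp only [det_apply]
    fun_prop
  have hline : HasDerivAt (fun t : 𝕜 => M x + t • M') M' 0 := by
    have := ((hasDerivAt_id (0 : 𝕜)).smul_const M').const_add (M x)
    rwa [one_smul] at this
  have hval := (hdet.comp_hasDerivAt_of_eq 0 hline (by simp)).unique
    (hasDerivAt_det_add_smul _ M' hx)
  exact hval ▸ hdet.comp_hasDerivAt x hM

theorem HasDerivAt.matrix_inv_s15 [RCLike 𝕜] {M : 𝕜 → Matrix n n 𝕜} {M' : Matrix n n 𝕜}
    {x : 𝕜} (hM : HasDerivAt M M' x) (hx : IsUnit (M x).det) :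
    HasDerivAt (fun t => (M t)⁻¹) (-((M x)⁻¹ * M' * (M x)⁻¹)) x := by
  obtain ⟨u, hu⟩ := (isUnit_iff_isUnit_det _).mpr hx
  simp only [nonsing_inv_eq_ringInverse]
  have := (hasFDerivAt_ringInverse (𝕜 := 𝕜) u).comp_hasDerivAt_of_eq x hM hu
  rw [← hu, Ring.inverse_unit]
  exact this

omit [DecidableEq n] in
theorem HasDerivAt.trace [NontriviallyNormedField 𝕜] [CompleteSpace 𝕜] {M : 𝕜 → Matrix n n 𝕜}
    {M' : Matrix n n 𝕜} {x : 𝕜} (hM : HasDerivAt M M' x) :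
    HasDerivAt (fun t => (M t).trace) M'.trace x :=
  (traceLinearMap n 𝕜 𝕜).toContinuousLinearMap.hasFDerivAt.comp_hasDerivAt x hM

theorem hasDerivAt_trace_inv_mul [RCLike 𝕜] {M M' : 𝕜 → Matrix n n 𝕜}
    {M'' : Matrix n n 𝕜} {x : 𝕜}
    (hM : HasDerivAt M (M' x) x) (hM' : HasDerivAt M' M'' x) (hx : IsUnit (M x).det) :
    HasDerivAt (fun t => trace ((M t)⁻¹ * M' t))
      (trace ((M x)⁻¹ * M'' - (M x)⁻¹ * M' x * (M x)⁻¹ * M' x)) x := by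
  convert ((hM.matrix_inv_s15 hx).fun_mul hM').trace using 2
  noncomm_ring

theorem HasDerivAt.log_det {M : ℝ → Matrix n n ℝ} {M' : Matrix n n ℝ} {x : ℝ}
    (hM : HasDerivAt M M' x) (hx : (M x).det ≠ 0) :
    HasDerivAt (fun t => Real.log (M t).det) ((M x)⁻¹ * M').trace x := by
  convert (hM.det hx.isUnit).log hx using 1
  field_simp

theorem eventually_hasDerivAt_log_det {M M' : ℝ → Matrix n n ℝ} {x : ℝ}
    (hM : ∀ᶠ t in 𝓝 x, HasDerivAt M (M' t) t) (hx : (M x).det ≠ 0) :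
    ∀ᶠ t in 𝓝 x, HasDerivAt (fun s => Real.log (M s).det) (trace ((M t)⁻¹ * M' t)) t := by
  have hdet : ∀ᶠ t in 𝓝 x, (M t).det ≠ 0 :=
    (hM.self_of_nhds.det hx.isUnit).continuousAt.eventually_ne hx
  filter_upwards [hM, hdet] with t hMt ht using hMt.log_det ht

theorem deriv_deriv_log_det_add_sub_log_det {M₁ M₂ M₁' M₂' : ℝ → Matrix n n ℝ}
    {M₁'' M₂'' : Matrix n n ℝ} {x : ℝ}
    (hM₁ : ∀ᶠ t in 𝓝 x, HasDerivAt M₁ (M₁' t) t) (hM₂ : ∀ᶠ t in 𝓝 x, HasDerivAt M₂ (M₂' t) t)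
    (hM₁' : HasDerivAt M₁' M₁'' x) (hM₂' : HasDerivAt M₂' M₂'' x)
    (h₁ : (M₁ x).det ≠ 0) (h₂ : (M₂ x).det ≠ 0) (h₃ : (M₁ x + M₂ x).det ≠ 0) :
    deriv (deriv fun t => Real.log (M₁ t).det + Real.log (M₂ t).det
        - Real.log (M₁ t + M₂ t).det) x =
      trace ((M₁ x)⁻¹ * M₁'' - (M₁ x)⁻¹ * M₁' x * (M₁ x)⁻¹ * M₁' x)
        + trace ((M₂ x)⁻¹ * M₂'' - (M₂ x)⁻¹ * M₂' x * (M₂ x)⁻¹ * M₂' x)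
        - trace ((M₁ x + M₂ x)⁻¹ * (M₁'' + M₂'')
          - (M₁ x + M₂ x)⁻¹ * (M₁' x + M₂' x) * (M₁ x + M₂ x)⁻¹ * (M₁' x + M₂' x)) := by
  have hM₃ : ∀ᶠ t in 𝓝 x, HasDerivAt (fun t => M₁ t + M₂ t) (M₁' t + M₂' t) t :=
    (hM₁.and hM₂).mono fun t ht => ht.1.fun_add ht.2
  refine deriv_deriv_eq_of_eventually_hasDerivAt
    (((eventually_hasDerivAt_log_det hM₁ h₁).and (eventually_hasDerivAt_log_det hM₂ h₂)).and
      (eventually_hasDerivAt_log_det hM₃ h₃) |>.mono fun t ht =>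
        (ht.1.1.fun_add ht.1.2).fun_sub ht.2)
    (((hasDerivAt_trace_inv_mul hM₁.self_of_nhds hM₁' h₁.isUnit).fun_add
      (hasDerivAt_trace_inv_mul hM₂.self_of_nhds hM₂' h₂.isUnit)).fun_sub
      (hasDerivAt_trace_inv_mul hM₃.self_of_nhds (hM₁'.fun_add hM₂') h₃.isUnit))

end MatrixCalculus

section Reciprocals

variable {𝕜 : Type*} [NontriviallyNormedField 𝕜] {t : 𝕜}

theorem hasDerivAt_one_div (ht : t ≠ 0) :
    HasDerivAt (fun s : 𝕜 => 1 / s) (-(1 / t) ^ 2) t := by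
  simpa [one_div, inv_pow] using hasDerivAt_inv ht

theorem hasDerivAt_neg_one_div_sq (ht : t ≠ 0) :
    HasDerivAt (fun s : 𝕜 => -(1 / s) ^ 2) (2 * (1 / t) ^ 3) t := by
  refine ((hasDerivAt_one_div ht).fun_pow 2).neg.congr_deriv ?_
  ring

theorem hasDerivAt_one_div_one_sub (ht : 1 - t ≠ 0) :
    HasDerivAt (fun s : 𝕜 => 1 / (1 - s)) ((1 / (1 - t)) ^ 2) t := by
  refine ((hasDerivAt_one_div ht).comp t ((hasDerivAt_id t).const_sub 1)).congr_deriv ?_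
  ring

theorem hasDerivAt_one_div_one_sub_sq (ht : 1 - t ≠ 0) :
    HasDerivAt (fun s : 𝕜 => (1 / (1 - s)) ^ 2) (2 * (1 / (1 - t)) ^ 3) t := by
  refine ((hasDerivAt_one_div_one_sub ht).fun_pow 2).congr_deriv ?_
  ring

end Reciprocals

theorem split_cif_second_deriv_decomposition_general (n : ℕ)
    (P1d P1i P2d P2i : Matrix (Fin n) (Fin n) ℝ)
    (hpos : ∀ w ∈ Set.Ioo (0 : ℝ) 1,
      ((1 / w) • P1d + P1i).PosDef ∧ ((1 / (1 - w)) • P2d + P2i).PosDef)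
    (w : ℝ) (hw : w ∈ Set.Ioo (0 : ℝ) 1)
    (P₁ P₂ P₃ D₁ D₂ : Matrix (Fin n) (Fin n) ℝ)
    (hP₁ : P₁ = (1 / w) • P1d + P1i) (hP₂ : P₂ = (1 / (1 - w)) • P2d + P2i)
    (hP₃ : P₃ = P₁ + P₂)
    (hD₁ : D₁ = (1 / w) • P1d) (hD₂ : D₂ = (1 / (1 - w)) • P2d)
    (T₁ T₂ T₃ : ℝ)
    (hT₁ : T₁ = Matrix.trace ((2 : ℝ) • (P₁⁻¹ * D₁) - (2 : ℝ) • (P₃⁻¹ * D₁)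
      - P₁⁻¹ * D₁ * P₁⁻¹ * D₁ + P₃⁻¹ * D₁ * P₃⁻¹ * D₁))
    (hT₂ : T₂ = Matrix.trace ((2 : ℝ) • (P₂⁻¹ * D₂) - (2 : ℝ) • (P₃⁻¹ * D₂)
      - P₂⁻¹ * D₂ * P₂⁻¹ * D₂ + P₃⁻¹ * D₂ * P₃⁻¹ * D₂))
    (hT₃ : T₃ = Matrix.trace (P₃⁻¹ * D₁ * P₃⁻¹ * D₂)) :
    deriv (deriv (fun x =>
        Real.log ((1 / x) • P1d + P1i).det + Real.log ((1 / (1 - x)) • P2d + P2i).det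
          - Real.log (((1 / x) • P1d + P1i) + ((1 / (1 - x)) • P2d + P2i)).det)) w =
      T₁ / w ^ 2 + T₂ / (1 - w) ^ 2 - 2 * T₃ / (w * (1 - w)) := by
  have hnear : ∀ᶠ t in 𝓝 w, t ≠ 0 ∧ 1 - t ≠ 0 := by
    filter_upwards [Ioo_mem_nhds hw.1 hw.2] with t ht
    exact ⟨ht.1.ne', sub_ne_zero.mpr ht.2.ne'⟩
  obtain ⟨hw₀, hw₁⟩ := hnear.self_of_nhds
  obtain ⟨hpos₁, hpos₂⟩ := hpos w hw
  refine (deriv_deriv_log_det_add_sub_log_det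
    (hnear.mono fun t ht => ((hasDerivAt_one_div ht.1).smul_const P1d).add_const P1i)
    (hnear.mono fun t ht => ((hasDerivAt_one_div_one_sub ht.2).smul_const P2d).add_const P2i)
    ((hasDerivAt_neg_one_div_sq hw₀).smul_const P1d)
    ((hasDerivAt_one_div_one_sub_sq hw₁).smul_const P2d)
    hpos₁.det_pos.ne' hpos₂.det_pos.ne' (hpos₁.add hpos₂).det_pos.ne').trans ?_
  rw [← hP₁, ← hP₂, ← hP₃]
  subst hT₁ hT₂ hT₃ hD₁ hD₂
  have hcross : trace (P₃⁻¹ * P2d * P₃⁻¹ * P1d) = trace (P₃⁻¹ * P1d * P₃⁻¹ * P2d) := by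
    rw [mul_assoc, trace_mul_comm, ← mul_assoc]
  simp only [Matrix.mul_add, Matrix.add_mul, Matrix.mul_smul, Matrix.smul_mul, trace_add,
    trace_sub, trace_smul, smul_eq_mul, hcross]
  field_simp
  ring

/-- For the split CIF, at a fixed `w ∈ (0,1)`, the second derivative of
`x ↦ log det P₁(x) + log det P₂(x) − log det (P₁(x) + P₂(x))` equals
`T₁/w² + T₂/(1−w)² − 2 T₃/(w(1−w))` with `T₁`, `T₂`, `T₃` the indicated traces. -/
theorem split_cif_second_deriv_decomposition (n : ℕ) (hn : 0 < n)
    (P1d P1i P2d P2i : Matrix (Fin n) (Fin n) ℝ)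
    (hP1d : P1d.PosSemidef) (hP1i : P1i.PosSemidef)
    (hP2d : P2d.PosSemidef) (hP2i : P2i.PosSemidef)
    (hpos : ∀ w ∈ Set.Ioo (0 : ℝ) 1,
      ((1 / w) • P1d + P1i).PosDef ∧ ((1 / (1 - w)) • P2d + P2i).PosDef)
    (w : ℝ) (hw : w ∈ Set.Ioo (0 : ℝ) 1)
    (P₁ P₂ P₃ D₁ D₂ : Matrix (Fin n) (Fin n) ℝ)
    (hP₁ : P₁ = (1 / w) • P1d + P1i) (hP₂ : P₂ = (1 / (1 - w)) • P2d + P2i)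
    (hP₃ : P₃ = P₁ + P₂)
    (hD₁ : D₁ = (1 / w) • P1d) (hD₂ : D₂ = (1 / (1 - w)) • P2d)
    (T₁ T₂ T₃ : ℝ)
    (hT₁ : T₁ = Matrix.trace ((2 : ℝ) • (P₁⁻¹ * D₁) - (2 : ℝ) • (P₃⁻¹ * D₁)
      - P₁⁻¹ * D₁ * P₁⁻¹ * D₁ + P₃⁻¹ * D₁ * P₃⁻¹ * D₁))
    (hT₂ : T₂ = Matrix.trace ((2 : ℝ) • (P₂⁻¹ * D₂) - (2 : ℝ) • (P₃⁻¹ * D₂)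
      - P₂⁻¹ * D₂ * P₂⁻¹ * D₂ + P₃⁻¹ * D₂ * P₃⁻¹ * D₂))
    (hT₃ : T₃ = Matrix.trace (P₃⁻¹ * D₁ * P₃⁻¹ * D₂)) :
    deriv (deriv (fun x =>
        Real.log ((1 / x) • P1d + P1i).det + Real.log ((1 / (1 - x)) • P2d + P2i).det
          - Real.log (((1 / x) • P1d + P1i) + ((1 / (1 - x)) • P2d + P2i)).det)) w =
      T₁ / w ^ 2 + T₂ / (1 - w) ^ 2 - 2 * T₃ / (w * (1 - w)) :=
  split_cif_second_deriv_decomposition_general n P1d P1i P2d P2i hpos w hw P₁ P₂ P₃ D₁ D₂ hP₁ hP₂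
    hP₃ hD₁ hD₂ T₁ T₂ T₃ hT₁ hT₂ hT₃
end

section
/- Let n be a positive integer and let P1d, P1i, P2d, P2i be n×n real symmetric positive semidefinite matrices. For w ∈ (0,1) define P₁(w) = (1/w)·P1d + P1i and P₂(w) = (1/(1−w))·P2d + P2i, and assume P₁(w) and P₂(w) are positive definite for every w ∈ (0,1). Fix w ∈ (0,1) and set D₁ = P1d/w, D₂ = P2d/(1−w), P₃ = P₁(w)+P₂(w). Then the matrix inequalities 0 ≤ D₁ ≤ P₁(w) < P₃ and 0 ≤ D₂ ≤ P₂(w) < P₃ hold; consequently, by the key trace inequality, T₁ ≥ tr((P₁(w)⁻¹ − P₃⁻¹)·D₁·(P₁(w)⁻¹ − P₃⁻¹)·D₁) and T₂ ≥ tr((P₂(w)⁻¹ − P₃⁻¹)·D₂·(P₂(w)⁻¹ − P₃⁻¹)·D₂), where T₁ = tr(2P₁⁻¹D₁ − 2P₃⁻¹D₁ − P₁⁻¹D₁P₁⁻¹D₁ + P₃⁻¹D₁P₃⁻¹D₁) and T₂ = tr(2P₂⁻¹D₂ − 2P₃⁻¹D₂ − P₂⁻¹D₂P₂⁻¹D₂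 + P₃⁻¹D₂P₃⁻¹D₂) (with P₁ = P₁(w), P₂ = P₂(w)). -/
/-!
Write `a = P⁻¹` and `b = Q⁻¹`. By cyclicity of the trace, the gap between the two sides of the
key trace inequality is `2 tr((a - b)(D - D a D))`. Both factors are positive semidefinite:
`a - b` because inversion is antitone on positive definite matrices, and `D - D P⁻¹ D` because
`D ≤ P`; and the trace of a product of two positive semidefinite matrices is nonnegative.
Both semidefiniteness facts are instances of one quadratic-form estimate: if `0 ≤ M ≤ N` and
`N y = M x`, then `yᵀ N y ≤ xᵀ M x`, obtained by expanding `(x - y)ᵀ M (x - y) ≥ 0`.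
-/

namespace Matrix

variable {n : Type*} [Fintype n]

lemma IsHermitian.dotProduct_mulVec_comm_s17 {M : Matrix n n ℝ} (hM : M.IsHermitian) (x y : n → ℝ) :
    x ⬝ᵥ M *ᵥ y = y ⬝ᵥ M *ᵥ x := by
  rw [dotProduct_mulVec, ← mulVec_transpose, ← conjTranspose_eq_transpose_of_trivial, hM.eq,
    dotProduct_comm]

lemma PosSemidef.dotProduct_mulVec_le_of_mulVec_eq {M N : Matrix n n ℝ} (hM : M.PosSemidef)
    (hMN : (N - M).PosSemidef) {x y : n → ℝ} (hxy : N *ᵥ y = M *ᵥ x) :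
    y ⬝ᵥ N *ᵥ y ≤ x ⬝ᵥ M *ᵥ x := by
  have hx_sub_y := hM.dotProduct_mulVec_nonneg (x - y)
  have hy := hMN.dotProduct_mulVec_nonneg y
  have hcomm := hM.isHermitian.dotProduct_mulVec_comm_s17 x y
  have hyx : y ⬝ᵥ M *ᵥ x = y ⬝ᵥ N *ᵥ y := by rw [hxy]
  simp only [star_trivial, sub_mulVec, mulVec_sub, dotProduct_sub, sub_dotProduct] at hx_sub_y hy
  linarith

variable [DecidableEq n]

lemma PosDef.posSemidef_inv_sub_inv {P Q : Matrix n n ℝ} (hP : P.PosDef)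
    (hPQ : (Q - P).PosSemidef) : (P⁻¹ - Q⁻¹).PosSemidef := by
  have hQ : Q.PosDef := by simpa using hP.add_posSemidef hPQ
  refine .of_dotProduct_mulVec_nonneg (hP.inv.isHermitian.sub hQ.inv.isHermitian) fun z ↦ ?_
  have hx : P *ᵥ (P⁻¹ *ᵥ z) = z := by
    rw [mulVec_mulVec, mul_nonsing_inv _ hP.det_pos.ne'.isUnit, one_mulVec]
  have hy : Q *ᵥ (Q⁻¹ *ᵥ z) = z := by
    rw [mulVec_mulVec, mul_nonsing_inv _ hQ.det_pos.ne'.isUnit, one_mulVec]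
  have key := hP.posSemidef.dotProduct_mulVec_le_of_mulVec_eq hPQ (hy.trans hx.symm)
  rw [hx, hy, dotProduct_comm, dotProduct_comm _ z] at key
  simpa only [star_trivial, sub_mulVec, dotProduct_sub, sub_nonneg] using key

lemma PosSemidef.posSemidef_sub_mul_inv_mul {D P : Matrix n n ℝ} (hD : D.PosSemidef)
    (hP : P.PosDef) (hPD : (P - D).PosSemidef) : (D - D * P⁻¹ * D).PosSemidef := by
  have hDPD : (D * P⁻¹ * D).PosSemidef := by
    simpa only [hD.isHermitian.eq] using hP.inv.posSemidef.conjTranspose_mul_mul_same D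
  have hPP : P * P⁻¹ = 1 := mul_nonsing_inv _ hP.det_pos.ne'.isUnit
  refine .of_dotProduct_mulVec_nonneg (hD.isHermitian.sub hDPD.isHermitian) fun x ↦ ?_
  have hy : P *ᵥ (P⁻¹ *ᵥ (D *ᵥ x)) = D *ᵥ x := by rw [mulVec_mulVec, hPP, one_mulVec]
  have key := hD.dotProduct_mulVec_le_of_mulVec_eq hPD hy
  have hcomm := hD.isHermitian.dotProduct_mulVec_comm_s17 x (P⁻¹ *ᵥ (D *ᵥ x))
  rw [hy] at key
  simp only [star_trivial, sub_mulVec, dotProduct_sub, sub_nonneg, ← mulVec_mulVec]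
  rwa [hcomm]

open scoped MatrixOrder ComplexOrder in
lemma PosSemidef.trace_mul_nonneg_s17 {𝕜 : Type*} [RCLike 𝕜] {A B : Matrix n n 𝕜}
    (hA : A.PosSemidef) (hB : B.PosSemidef) : 0 ≤ (A * B).trace := by
  have hS : (CFC.sqrt A)ᴴ = CFC.sqrt A := (nonneg_iff_posSemidef.mp (CFC.sqrt_nonneg A)).isHermitian.eq
  have hSBS : (CFC.sqrt A * B * CFC.sqrt A).PosSemidef := by
    simpa only [hS] using hB.mul_mul_conjTranspose_same (CFC.sqrt A)
  calc 0 ≤ (CFC.sqrt A * B * CFC.sqrt A).trace := hSBS.trace_nonneg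
    _ = (A * B).trace := by
      rw [trace_mul_cycle, CFC.sqrt_mul_sqrt_self A hA.nonneg]

theorem PosDef.trace_inv_sub_inv_mul_sq_le {P Q D : Matrix n n ℝ} (hP : P.PosDef)
    (hD : D.PosSemidef) (hPD : (P - D).PosSemidef) (hPQ : (Q - P).PosSemidef) :
    trace ((P⁻¹ - Q⁻¹) * D * (P⁻¹ - Q⁻¹) * D) ≤
      trace ((2 : ℝ) • (P⁻¹ * D) - (2 : ℝ) • (Q⁻¹ * D)
        - P⁻¹ * D * P⁻¹ * D + Q⁻¹ * D * Q⁻¹ * D) := by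
  set a := P⁻¹
  set b := Q⁻¹
  have hnonneg : 0 ≤ trace ((a - b) * (D - D * a * D)) :=
    (hP.posSemidef_inv_sub_inv hPQ).trace_mul_nonneg_s17 (hD.posSemidef_sub_mul_inv_mul hP hPD)
  have hcycle : trace (b * D * a * D) = trace (a * D * b * D) := by
    rw [Matrix.mul_assoc (b * D), Matrix.mul_assoc (a * D)]
    exact trace_mul_comm _ _
  have hgap : trace ((2 : ℝ) • (a * D) - (2 : ℝ) • (b * D) - a * D * a * D + b * D * b * D)
      - trace ((a - b) * D * (a - b) * D) = 2 * trace ((a - b) * (D - D * a * D)) := by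
    simp only [sub_mul, mul_sub, Matrix.mul_assoc, trace_sub, trace_add, trace_smul, smul_eq_mul]
    simp only [← Matrix.mul_assoc] at hcycle ⊢
    linear_combination -hcycle
  linarith

end Matrix

theorem split_cif_T_lower_bounds_general (n : ℕ)
    (P1d P1i P2d P2i : Matrix (Fin n) (Fin n) ℝ)
    (hP1d : P1d.PosSemidef) (hP1i : P1i.PosSemidef)
    (hP2d : P2d.PosSemidef) (hP2i : P2i.PosSemidef)
    (hpos : ∀ w ∈ Set.Ioo (0 : ℝ) 1,
      ((1 / w) • P1d + P1i).PosDef ∧ ((1 / (1 - w)) • P2d + P2i).PosDef)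
    (w : ℝ) (hw : w ∈ Set.Ioo (0 : ℝ) 1)
    (P₁ P₂ P₃ D₁ D₂ : Matrix (Fin n) (Fin n) ℝ)
    (hP₁ : P₁ = (1 / w) • P1d + P1i) (hP₂ : P₂ = (1 / (1 - w)) • P2d + P2i)
    (hP₃ : P₃ = P₁ + P₂)
    (hD₁ : D₁ = (1 / w) • P1d) (hD₂ : D₂ = (1 / (1 - w)) • P2d)
    (T₁ T₂ : ℝ)
    (hT₁ : T₁ = Matrix.trace ((2 : ℝ) • (P₁⁻¹ * D₁) - (2 : ℝ) • (P₃⁻¹ * D₁)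
      - P₁⁻¹ * D₁ * P₁⁻¹ * D₁ + P₃⁻¹ * D₁ * P₃⁻¹ * D₁))
    (hT₂ : T₂ = Matrix.trace ((2 : ℝ) • (P₂⁻¹ * D₂) - (2 : ℝ) • (P₃⁻¹ * D₂)
      - P₂⁻¹ * D₂ * P₂⁻¹ * D₂ + P₃⁻¹ * D₂ * P₃⁻¹ * D₂)) :
    D₁.PosSemidef ∧ (P₁ - D₁).PosSemidef ∧ (P₃ - P₁).PosDef ∧
    D₂.PosSemidef ∧ (P₂ - D₂).PosSemidef ∧ (P₃ - P₂).PosDef ∧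
    Matrix.trace ((P₁⁻¹ - P₃⁻¹) * D₁ * (P₁⁻¹ - P₃⁻¹) * D₁) ≤ T₁ ∧
    Matrix.trace ((P₂⁻¹ - P₃⁻¹) * D₂ * (P₂⁻¹ - P₃⁻¹) * D₂) ≤ T₂ := by
  obtain ⟨hw₀, hw₁⟩ := hw
  have hP₁pd : P₁.PosDef := hP₁ ▸ (hpos w ⟨hw₀, hw₁⟩).1
  have hP₂pd : P₂.PosDef := hP₂ ▸ (hpos w ⟨hw₀, hw₁⟩).2
  have hD₁psd : D₁.PosSemidef := hD₁ ▸ hP1d.smul (by positivity)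
  have hD₂psd : D₂.PosSemidef := hD₂ ▸ hP2d.smul (one_div_nonneg.mpr (sub_nonneg.mpr hw₁.le))
  have hP₁D₁ : (P₁ - D₁).PosSemidef := by rwa [hP₁, hD₁, add_sub_cancel_left]
  have hP₂D₂ : (P₂ - D₂).PosSemidef := by rwa [hP₂, hD₂, add_sub_cancel_left]
  have hP₃P₁ : (P₃ - P₁).PosDef := by rwa [hP₃, add_sub_cancel_left]
  have hP₃P₂ : (P₃ - P₂).PosDef := by rwa [hP₃, add_sub_cancel_right]
  refine ⟨hD₁psd, hP₁D₁, hP₃P₁, hD₂psd, hP₂D₂, hP₃P₂, ?_, ?_⟩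
  · exact hT₁ ▸ hP₁pd.trace_inv_sub_inv_mul_sq_le hD₁psd hP₁D₁ hP₃P₁.posSemidef
  · exact hT₂ ▸ hP₂pd.trace_inv_sub_inv_mul_sq_le hD₂psd hP₂D₂ hP₃P₂.posSemidef

/-- For the split CIF, at a fixed `w ∈ (0,1)`, the matrix inequalities
`0 ≤ D₁ ≤ P₁(w) < P₃` and `0 ≤ D₂ ≤ P₂(w) < P₃` hold, and consequently
`T₁ ≥ tr((P₁⁻¹ − P₃⁻¹) D₁ (P₁⁻¹ − P₃⁻¹) D₁)` and
`T₂ ≥ tr((P₂⁻¹ − P₃⁻¹) D₂ (P₂⁻¹ − P₃⁻¹) D₂)`. -/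
theorem split_cif_T_lower_bounds (n : ℕ) (hn : 0 < n)
    (P1d P1i P2d P2i : Matrix (Fin n) (Fin n) ℝ)
    (hP1d : P1d.PosSemidef) (hP1i : P1i.PosSemidef)
    (hP2d : P2d.PosSemidef) (hP2i : P2i.PosSemidef)
    (hpos : ∀ w ∈ Set.Ioo (0 : ℝ) 1,
      ((1 / w) • P1d + P1i).PosDef ∧ ((1 / (1 - w)) • P2d + P2i).PosDef)
    (w : ℝ) (hw : w ∈ Set.Ioo (0 : ℝ) 1)
    (P₁ P₂ P₃ D₁ D₂ : Matrix (Fin n) (Fin n) ℝ)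
    (hP₁ : P₁ = (1 / w) • P1d + P1i) (hP₂ : P₂ = (1 / (1 - w)) • P2d + P2i)
    (hP₃ : P₃ = P₁ + P₂)
    (hD₁ : D₁ = (1 / w) • P1d) (hD₂ : D₂ = (1 / (1 - w)) • P2d)
    (T₁ T₂ : ℝ)
    (hT₁ : T₁ = Matrix.trace ((2 : ℝ) • (P₁⁻¹ * D₁) - (2 : ℝ) • (P₃⁻¹ * D₁)
      - P₁⁻¹ * D₁ * P₁⁻¹ * D₁ + P₃⁻¹ * D₁ * P₃⁻¹ * D₁))
    (hT₂ : T₂ = Matrix.trace ((2 : ℝ) • (P₂⁻¹ * D₂) - (2 : ℝ) • (P₃⁻¹ * D₂)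
      - P₂⁻¹ * D₂ * P₂⁻¹ * D₂ + P₃⁻¹ * D₂ * P₃⁻¹ * D₂)) :
    D₁.PosSemidef ∧ (P₁ - D₁).PosSemidef ∧ (P₃ - P₁).PosDef ∧
    D₂.PosSemidef ∧ (P₂ - D₂).PosSemidef ∧ (P₃ - P₂).PosDef ∧
    Matrix.trace ((P₁⁻¹ - P₃⁻¹) * D₁ * (P₁⁻¹ - P₃⁻¹) * D₁) ≤ T₁ ∧
    Matrix.trace ((P₂⁻¹ - P₃⁻¹) * D₂ * (P₂⁻¹ - P₃⁻¹) * D₂) ≤ T₂ :=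
  split_cif_T_lower_bounds_general n P1d P1i P2d P2i hP1d hP1i hP2d hP2i hpos w hw P₁ P₂ P₃ D₁ D₂
    hP₁ hP₂ hP₃ hD₁ hD₂ T₁ T₂ hT₁ hT₂
end
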